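/- Let f : V₀ → ℝ be continuous and suppose Γ_f is ruled, in the sense that every point of Γ_f lies on a horizontal line contained in Γ_f. Suppose L₁, L₂ ⊆ Γ_f are horizontal lines, with directions (1, m₁, 0) and (1, m₂, 0) respectively where m₁ < m₂, that both pass through a common point p ∈ Γ_f. Then for every m ∈ [m₁, m₂], the horizontal line p·{t·(1, m, 0) : t ∈ ℝ} is contained in Γ_f. -/

import Mathlib

open MeasureTheory Filter

noncomputable section

/-- The Heisenberg group, identified with `ℝ³`. -/
abbrev H : Type := ℝ × ℝ × ℝ

/-- Heisenberg group multiplication. -/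
def Hmul (p q : H) : H :=
  (p.1 + q.1, p.2.1 + q.2.1, p.2.2 + q.2.2 + (p.1 * q.2.1 - p.2.1 * q.1) / 2)

/-- Heisenberg group inverse. -/
def Hinv (p : H) : H := (-p.1, -p.2.1, -p.2.2)

/-- The intrinsic projection `Π : ℍ → V₀`. -/
def Proj (p : H) : H := (p.1, 0, p.2.2 - p.1 * p.2.1 / 2)

/-- The `xz`-plane `V₀`. -/
def V0 : Set H := {p : H | p.2.1 = 0}

/-- The intrinsic graph of `f` over `D ⊆ V₀`. -/
def IGraph (D : Set H) (f : H → ℝ) : Set H :=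
  {q : H | ∃ x z : ℝ, ((x, (0 : ℝ), z) ∈ D) ∧
    q = (x, f (x, 0, z), z + x * f (x, 0, z) / 2)}

/-- The horizontal line through `p` with slope `m` (direction `(1, m, 0)`). -/
def horizLine (p : H) (m : ℝ) : Set H := {q : H | ∃ t : ℝ, q = Hmul p (t, t * m, 0)}

/-- The horizontal line through `p` with direction `(a, b, 0)`. -/
def horizLineGen (p : H) (a b : ℝ) : Set H := {q : H | ∃ t : ℝ, q = Hmul p (t * a, t * b, 0)}

/-- `Γ_f` is ruled: every point of `Γ_f` lies on a horizontal line contained in `Γ_f`. -/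
def IsRuled (S : Set H) : Prop :=
  ∀ p ∈ S, ∃ q : H, ∃ a b : ℝ, (a, b) ≠ ((0 : ℝ), (0 : ℝ)) ∧
    p ∈ horizLineGen q a b ∧ horizLineGen q a b ⊆ S

/-!
A horizontal line `p · {t (1, m, 0)}` projects onto the parabola `z = charCurve p m x` in `V₀`,
and it lies in `Γ_f` exactly when `f = charSlope p m = -(d/dx) charCurve p m` along that
parabola: the projected lines in `Γ_f` are characteristics of `f`. Two characteristics are
therefore tangent wherever they meet, so their difference, a quadratic with only double zeros,
never changes sign. For `x ≠ p.1`, the projection of the point above `x` on the line of slope `m`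
lies strictly between the characteristics of slopes `m₁` and `m₂` through `p`, so the
characteristic of the ruling of `Γ_f` through the graph point over it can cross neither and
must touch both at `Π p`; matching value and slope there, and value at `x`, forces it to be the
characteristic of slope `m` through `p`.
-/

lemma mem_IGraph_V0_iff {f : H → ℝ} {q : H} : q ∈ IGraph V0 f ↔ q.2.1 = f (Proj q) := by
  constructor
  · rintro ⟨x, z, -, rfl⟩
    simp only [Proj, add_sub_cancel_right]
  · intro h
    refine ⟨q.1, q.2.2 - q.1 * q.2.1 / 2, rfl, ?_⟩
    rw [← Proj, ← h, sub_add_cancel]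

/-- `Π (horizLine p m)` is the graph of `x ↦ (x, 0, charCurve p m x)`, and `charSlope p m x` is
the `y`-coordinate of the point of the line above `x`. -/
def charCurve (p : H) (m x : ℝ) : ℝ :=
  (Proj p).2.2 - p.2.1 * (x - p.1) - m * (x - p.1) ^ 2 / 2

def charSlope (p : H) (m x : ℝ) : ℝ := p.2.1 + m * (x - p.1)

lemma charCurve_self (p : H) (m : ℝ) : charCurve p m p.1 = (Proj p).2.2 := by
  simp [charCurve]

lemma charSlope_self (p : H) (m : ℝ) : charSlope p m p.1 = p.2.1 := by
  simp [charSlope]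

lemma charCurve_expand (p : H) (m x y : ℝ) :
    charCurve p m y = charCurve p m x - charSlope p m x * (y - x) - m / 2 * (y - x) ^ 2 := by
  simp only [charCurve, charSlope]; ring

lemma charSlope_expand (p : H) (m x y : ℝ) :
    charSlope p m y = charSlope p m x + m * (y - x) := by
  simp only [charSlope]; ring

lemma charCurve_lt_charCurve {p : H} {m m' x : ℝ} (hx : x ≠ p.1) (hm : m < m') :
    charCurve p m' x < charCurve p m x := by
  have : 0 < (x - p.1) ^ 2 := by positivity [sub_ne_zero.mpr hx]
  simp only [charCurve]
  nlinarith

lemma Proj_Hmul (p : H) (m t : ℝ) :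
    Proj (Hmul p (t, t * m, 0)) = (p.1 + t, 0, charCurve p m (p.1 + t)) := by
  refine Prod.ext rfl (Prod.ext rfl ?_)
  simp only [Proj, Hmul, charCurve]
  ring

lemma horizLine_subset_IGraph_V0_iff {f : H → ℝ} {p : H} {m : ℝ} :
    horizLine p m ⊆ IGraph V0 f ↔ ∀ x, f (x, 0, charCurve p m x) = charSlope p m x := by
  constructor
  · intro h x
    have hx := mem_IGraph_V0_iff.mp (h ⟨x - p.1, rfl⟩)
    rw [Proj_Hmul, add_sub_cancel] at hx
    rw [← hx, charSlope, Hmul]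
    ring
  · rintro h _ ⟨t, rfl⟩
    rw [mem_IGraph_V0_iff, Proj_Hmul, h, charSlope, Hmul]
    ring

lemma horizLine_subset_of_mem {p q : H} {m : ℝ} (hq : q ∈ horizLine p m) :
    horizLine q m ⊆ horizLine p m := by
  obtain ⟨s, rfl⟩ := hq
  rintro _ ⟨t, rfl⟩
  refine ⟨s + t, ?_⟩
  simp only [Hmul, Prod.mk.injEq]
  exact ⟨by ring, by ring, by ring⟩

lemma horizLineGen_eq_horizLine (p : H) {a : ℝ} (b : ℝ) (ha : a ≠ 0) :
    horizLineGen p a b = horizLine p (b / a) := by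
  ext q
  constructor
  · rintro ⟨t, rfl⟩
    exact ⟨t * a, by rw [mul_assoc, mul_div_cancel₀ b ha]⟩
  · rintro ⟨t, rfl⟩
    exact ⟨t / a, by rw [div_mul_cancel₀ t ha, div_mul_eq_mul_div, mul_div_assoc]⟩

lemma ne_zero_of_horizLineGen_subset_IGraph_V0 {f : H → ℝ} {p : H} {a b : ℝ}
    (hab : (a, b) ≠ ((0 : ℝ), (0 : ℝ))) (h : horizLineGen p a b ⊆ IGraph V0 f) : a ≠ 0 := by
  rintro rfl
  have hProj : ∀ t : ℝ, Proj (Hmul p (t * 0, t * b, 0)) = Proj p := by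
    intro t
    refine Prod.ext (by simp [Proj, Hmul]) (Prod.ext rfl ?_)
    simp only [Proj, Hmul]
    ring
  have hy : ∀ t : ℝ, p.2.1 + t * b = f (Proj p) := fun t => by
    have := mem_IGraph_V0_iff.mp (h ⟨t, rfl⟩)
    rw [hProj] at this
    simpa [Hmul] using this
  have hb : b = 0 := by linarith [hy 0, hy 1]
  exact hab (by rw [hb])

lemma exists_horizLine_subset_of_isRuled {f : H → ℝ} (hruled : IsRuled (IGraph V0 f))
    {r : H} (hr : r ∈ IGraph V0 f) : ∃ μ, horizLine r μ ⊆ IGraph V0 f := by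
  obtain ⟨q, a, b, hab, hrq, hsub⟩ := hruled r hr
  have ha := ne_zero_of_horizLineGen_subset_IGraph_V0 hab hsub
  rw [horizLineGen_eq_horizLine q b ha] at hrq hsub
  exact ⟨b / a, (horizLine_subset_of_mem hrq).trans hsub⟩

/-- A quadratic all of whose zeros are double cannot change sign. -/
lemma nonneg_of_pos_of_double_zeros {g g' : ℝ → ℝ} {a : ℝ}
    (hexp : ∀ x y, g y = g x + g' x * (y - x) + a * (y - x) ^ 2)
    (hdouble : ∀ x, g x = 0 → g' x = 0) {u : ℝ} (hu : 0 < g u) (v : ℝ) : 0 ≤ g v := by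
  by_contra! hv
  have hcont : Continuous g := by
    rw [show g = fun y => g 0 + g' 0 * (y - 0) + a * (y - 0) ^ 2 from funext (hexp 0)]
    fun_prop
  obtain ⟨x, -, hx⟩ := intermediate_value_uIcc hcont.continuousOn
    (Set.mem_uIcc.mpr (Or.inr ⟨hv.le, hu.le⟩) : (0 : ℝ) ∈ Set.uIcc (g u) (g v))
  have hsq : ∀ y, g y = a * (y - x) ^ 2 := fun y => by rw [hexp x y, hx, hdouble x hx]; ring
  rw [hsq] at hu hv
  have ha : 0 < a := pos_of_mul_pos_left hu (sq_nonneg _)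
  exact hv.not_ge (by positivity)

section Characteristics

variable {f : H → ℝ} {p q : H} {m μ : ℝ}

lemma charSlope_eq_of_charCurve_eq (hp : horizLine p m ⊆ IGraph V0 f)
    (hq : horizLine q μ ⊆ IGraph V0 f) {x : ℝ} (h : charCurve p m x = charCurve q μ x) :
    charSlope p m x = charSlope q μ x := by
  rw [horizLine_subset_IGraph_V0_iff] at hp hq
  rw [← hp, ← hq, h]

lemma charCurve_le_of_lt (hp : horizLine p m ⊆ IGraph V0 f) (hq : horizLine q μ ⊆ IGraph V0 f)
    {u : ℝ} (hu : charCurve q μ u < charCurve p m u) (v : ℝ) :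
    charCurve q μ v ≤ charCurve p m v := by
  refine sub_nonneg.mp (nonneg_of_pos_of_double_zeros
    (g := fun x => charCurve p m x - charCurve q μ x)
    (g' := fun x => charSlope q μ x - charSlope p m x) (a := (μ - m) / 2)
    (fun x y => by rw [charCurve_expand p m x y, charCurve_expand q μ x y]; ring)
    (fun x hx => by rw [charSlope_eq_of_charCurve_eq hp hq (sub_eq_zero.mp hx), sub_self])
    (sub_pos.mpr hu) v)

lemma charSlope_eq_of_osculating {x₀ x₁ : ℝ} (hx : x₁ ≠ x₀)
    (h₀ : charCurve q μ x₀ = charCurve p m x₀) (h₀' : charSlope q μ x₀ = charSlope p m x₀)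
    (h₁ : charCurve q μ x₁ = charCurve p m x₁) : charSlope q μ x₁ = charSlope p m x₁ := by
  have hsq : 0 < (x₁ - x₀) ^ 2 := by positivity [sub_ne_zero.mpr hx]
  rw [charCurve_expand q μ x₀, charCurve_expand p m x₀, h₀, h₀'] at h₁
  have hμ : μ = m := by nlinarith
  rw [charSlope_expand q μ x₀, charSlope_expand p m x₀, h₀', hμ]

end Characteristics

lemma apply_charCurve_eq_charSlope_of_mem_Ioo {f : H → ℝ} (hruled : IsRuled (IGraph V0 f))
    {p : H} {m₁ m₂ m : ℝ} (h₁ : horizLine p m₁ ⊆ IGraph V0 f) (h₂ : horizLine p m₂ ⊆ IGraph V0 f)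
    (hm : m ∈ Set.Ioo m₁ m₂) {x : ℝ} (hx : x ≠ p.1) :
    f (x, 0, charCurve p m x) = charSlope p m x := by
  set z := charCurve p m x
  set r : H := (x, f (x, 0, z), z + x * f (x, 0, z) / 2)
  obtain ⟨μ, hμ⟩ := exists_horizLine_subset_of_isRuled hruled (r := r) ⟨x, z, rfl, rfl⟩
  have hr : charCurve r μ x = z := by
    simp only [charCurve, Proj, r]; ring
  have hle₁ : charCurve r μ p.1 ≤ charCurve p m₁ p.1 :=
    charCurve_le_of_lt h₁ hμ (by rw [hr]; exact charCurve_lt_charCurve hx hm.1) p.1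
  have hle₂ : charCurve p m₂ p.1 ≤ charCurve r μ p.1 :=
    charCurve_le_of_lt hμ h₂ (by rw [hr]; exact charCurve_lt_charCurve hx hm.2) p.1
  rw [charCurve_self] at hle₁ hle₂
  have hζ : charCurve r μ p.1 = (Proj p).2.2 := le_antisymm hle₁ hle₂
  have h₀' : charSlope r μ p.1 = charSlope p m p.1 := by
    rw [charSlope_eq_of_charCurve_eq hμ h₁ (by rw [hζ, charCurve_self]), charSlope_self,
      charSlope_self]
  rw [← charSlope_eq_of_osculating hx (by rw [hζ, charCurve_self]) h₀' hr]
  simp [charSlope, r]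

theorem fan_of_rulings_general
    (f : H → ℝ)
    (hruled : IsRuled (IGraph V0 f))
    (p : H)
    (m₁ m₂ : ℝ)
    (h₁ : horizLine p m₁ ⊆ IGraph V0 f)
    (h₂ : horizLine p m₂ ⊆ IGraph V0 f) :
    ∀ m ∈ Set.Icc m₁ m₂, horizLine p m ⊆ IGraph V0 f := by
  intro m hm
  rcases hm.1.eq_or_lt with rfl | hm₁
  · exact h₁
  rcases hm.2.eq_or_lt with rfl | hm₂
  · exact h₂
  rw [horizLine_subset_IGraph_V0_iff]
  intro x
  rcases eq_or_ne x p.1 with rfl | hx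
  · have := horizLine_subset_IGraph_V0_iff.mp h₁ p.1
    rwa [charCurve_self, charSlope_self] at this ⊢
  · exact apply_charCurve_eq_charSlope_of_mem_Ioo hruled h₁ h₂ ⟨hm₁, hm₂⟩ hx

/-- if two rulings of slopes `m₁ < m₂` of a ruled entire intrinsic
graph `Γ_f` pass through a common point `p`, then for every `m ∈ [m₁, m₂]` the
horizontal line of slope `m` through `p` is contained in `Γ_f`. -/
theorem fan_of_rulings
    (f : H → ℝ) (hf : ContinuousOn f V0)
    (hruled : IsRuled (IGraph V0 f))
    (p : H) (hp : p ∈ IGraph V0 f)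
    (m₁ m₂ : ℝ) (hm : m₁ < m₂)
    (h₁ : horizLine p m₁ ⊆ IGraph V0 f)
    (h₂ : horizLine p m₂ ⊆ IGraph V0 f) :
    ∀ m ∈ Set.Icc m₁ m₂, horizLine p m ⊆ IGraph V0 f :=
  fan_of_rulings_general f hruled p m₁ m₂ h₁ h₂
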